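/- arXiv:2604.02308 — 7 statements merged into one kernel-verified Lean document; each statement's English description precedes it below -/
import Mathlib

section
/- Let η : ℝ^d → ℝ be convex, let u, v ∈ ℝ^d have all components positive, and let e ∈ ℝ satisfy e ≤ η(u). Define the relaxation residual r(γ) = η((1−γ)u + γv) − (η(u) + γ(e − η(u))). If some γ* > 0 satisfies r(γ*) = 0, then with γ₀ := min{γ*, 1} the relaxed update u_{γ₀} := (1−γ₀)u + γ₀v has all components positive and satisfies η(u_{γ₀}) ≤ η(u). -/
/-- If `η` is convex, `u, v` are componentwise positive, `e ≤ η u`,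
and some `γ* > 0` is a root of the relaxation residual
`r(γ) = η((1-γ)u + γv) - (η u + γ(e - η u))`, then with `γ₀ = min γ* 1` the relaxed
update `(1-γ₀)u + γ₀v` is componentwise positive and does not increase `η`. -/
theorem stmt_0 {d : ℕ} (η : (Fin d → ℝ) → ℝ) (hη : ConvexOn ℝ Set.univ η)
    (u v : Fin d → ℝ) (hu : ∀ i, 0 < u i) (hv : ∀ i, 0 < v i)
    (e : ℝ) (he : e ≤ η u)
    (γs : ℝ) (hγs : 0 < γs)
    (hroot : η ((1 - γs) • u + γs • v) - (η u + γs * (e - η u)) = 0) :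
    (∀ i, 0 < ((1 - min γs 1) • u + (min γs 1) • v) i) ∧
      η ((1 - min γs 1) • u + (min γs 1) • v) ≤ η u := by
  have hγ0pos : 0 < min γs 1 := lt_min hγs one_pos
  have hγ0le : min γs 1 ≤ 1 := min_le_right _ _
  constructor
  · intro i
    simp only [Pi.add_apply, Pi.smul_apply, smul_eq_mul]
    have h1 : 0 ≤ (1 - min γs 1) * u i :=
      mul_nonneg (by linarith) (hu i).le
    have h2 : 0 < min γs 1 * v i := mul_pos hγ0pos (hv i)
    linarith
  · rcases le_or_gt γs 1 with h | h
    · rw [min_eq_left h]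
      nlinarith [mul_nonneg hγs.le (sub_nonneg.mpr he)]
    · rw [min_eq_right h.le]
      have hw : η ((1 - γs) • u + γs • v) = η u + γs * (e - η u) := by linarith
      have ha : (0:ℝ) ≤ 1/γs := by positivity
      have hb : (0:ℝ) ≤ 1 - 1/γs := by
        have : 1/γs ≤ 1 := by rw [div_le_one hγs]; linarith
        linarith
      have hab : 1/γs + (1 - 1/γs) = (1:ℝ) := by ring
      have key := hη.2 (Set.mem_univ ((1 - γs) • u + γs • v)) (Set.mem_univ u)
        ha hb hab
      have hpt : (1/γs) • ((1 - γs) • u + γs • v) + (1 - 1/γs) • u = v := by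
        funext i
        simp only [Pi.add_apply, Pi.smul_apply, smul_eq_mul]
        field_simp
        ring
      rw [hpt, hw] at key
      have hev : η v ≤ e := by
        have hne : γs ≠ 0 := ne_of_gt hγs
        simp only [smul_eq_mul] at key
        have : (1/γs) * (η u + γs * (e - η u)) + (1 - 1/γs) * η u = e := by
          field_simp; ring
        linarith
      have hsmul : (1 - (1:ℝ)) • u + (1:ℝ) • v = v := by simp
      rw [hsmul]
      linarith
end

section
/- Let n ≥ 1, let Δt > 0, and let d : ℝ → ℝ^n be continuously differentiable on a neighborhood of γ = 1 with d(1) ≠ 0. Define h(λ, γ) = λ − (γ − 1) Δt ‖d(γ)‖₂, where ‖·‖₂ is the Euclidean norm. Then there exist ε > 0 and a continuous function γ̃ : (−ε, ε) → ℝ with γ̃(0) = 1 such that h(λ, γ̃(λ)) = 0 for every λ ∈ (−ε, ε). -/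
/-!
The map `g γ = (γ - 1) Δt ‖d γ‖` vanishes at `γ = 1`, and since `‖d‖` is C¹ near `1`
(because `d 1 ≠ 0`), `g` has strict derivative `Δt ‖d 1‖ > 0` there. The inverse function
theorem then inverts `g` near `0 = g 1`, and `γ̃ = g⁻¹` solves `h(λ, γ̃ λ) = λ - g (γ̃ λ) = 0`.
-/

open Set

theorem HasStrictFDerivAt.exists_continuousOn_rightInverse {𝕜 E F : Type*}
    [NontriviallyNormedField 𝕜] [NormedAddCommGroup E] [NormedSpace 𝕜 E] [CompleteSpace E]
    [NormedAddCommGroup F] [NormedSpace 𝕜 F] {f : E → F} {f' : E ≃L[𝕜] F} {a : E}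
    (hf : HasStrictFDerivAt f (f' : E →L[𝕜] F) a) :
    ∃ ε > 0, ∃ g : F → E, g (f a) = a ∧ ContinuousOn g (Metric.ball (f a) ε) ∧
      ∀ y ∈ Metric.ball (f a) ε, f (g y) = y := by
  set P := hf.toOpenPartialHomeomorph f
  have hP : (P : E → F) = f := hf.toOpenPartialHomeomorph_coe
  obtain ⟨ε, hε, hball⟩ :=
    Metric.isOpen_iff.1 P.open_target (f a) hf.image_mem_toOpenPartialHomeomorph_target
  refine ⟨ε, hε, P.symm, ?_, P.continuousOn_symm.mono hball, fun y hy => ?_⟩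
  · simpa only [hP] using P.left_inv hf.mem_toOpenPartialHomeomorph_source
  · simpa only [hP] using P.right_inv (hball hy)

theorem HasStrictDerivAt.exists_continuousOn_rightInverse {f : ℝ → ℝ} {f' a : ℝ}
    (hf : HasStrictDerivAt f f' a) (hf' : f' ≠ 0) :
    ∃ ε > 0, ∃ g : ℝ → ℝ, g (f a) = a ∧ ContinuousOn g (Ioo (f a - ε) (f a + ε)) ∧
      ∀ y ∈ Ioo (f a - ε) (f a + ε), f (g y) = y := by
  simpa only [Real.ball_eq_Ioo] using
    (hf.hasStrictFDerivAt_equiv hf').exists_continuousOn_rightInverse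

theorem ContDiffAt.hasStrictDerivAt_sub_mul_norm {E : Type*} [NormedAddCommGroup E]
    [InnerProductSpace ℝ E] {d : ℝ → E} {a : ℝ} (hd : ContDiffAt ℝ 1 d a) (hda : d a ≠ 0)
    (c : ℝ) : HasStrictDerivAt (fun γ => (γ - a) * c * ‖d γ‖) (c * ‖d a‖) a := by
  have hnorm : HasStrictDerivAt (fun γ => c * ‖d γ‖) (deriv (fun γ => c * ‖d γ‖) a) a :=
    (contDiffAt_const.mul (hd.norm ℝ hda)).hasStrictDerivAt one_ne_zero
  have hlin : HasStrictDerivAt (fun γ : ℝ => γ - a) 1 a := (hasStrictDerivAt_id a).sub_const a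
  simpa only [mul_assoc, sub_self, zero_mul, one_mul, zero_add, add_zero] using hlin.fun_mul hnorm

theorem stmt_2_general {n : ℕ} (Δt : ℝ) (hΔt : 0 < Δt)
    (d : ℝ → EuclideanSpace ℝ (Fin n))
    (hd : ContDiffAt ℝ 1 d 1) (hd1 : d 1 ≠ 0) :
    ∃ ε > (0 : ℝ), ∃ γ' : ℝ → ℝ, γ' 0 = 1 ∧
      ContinuousOn γ' (Set.Ioo (-ε) ε) ∧
      ∀ lam ∈ Set.Ioo (-ε) ε, lam - (γ' lam - 1) * Δt * ‖d (γ' lam)‖ = 0 := by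
  have hslope : Δt * ‖d 1‖ ≠ 0 := (mul_pos hΔt (norm_pos_iff.mpr hd1)).ne'
  obtain ⟨ε, hε, γ', hγ'0, hcont, hsolve⟩ :=
    (hd.hasStrictDerivAt_sub_mul_norm hd1 Δt).exists_continuousOn_rightInverse hslope
  simp only [sub_self, zero_mul, zero_sub, zero_add] at hγ'0 hcont hsolve
  exact ⟨ε, hε, γ', hγ'0, hcont, fun lam hlam => sub_eq_zero.mpr (hsolve lam hlam).symm⟩

/-- Let `n ≥ 1`, `Δt > 0`, and let `d : ℝ → ℝⁿ` be continuously
differentiable on a neighborhood of `γ = 1` with `d 1 ≠ 0`. For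
`h(λ, γ) = λ - (γ - 1) Δt ‖d γ‖₂` there are `ε > 0` and a continuous function
`γ̃ : (-ε, ε) → ℝ` with `γ̃ 0 = 1` solving `h(λ, γ̃ λ) = 0` for all `λ ∈ (-ε, ε)`. -/
theorem stmt_2 {n : ℕ} (hn : 1 ≤ n) (Δt : ℝ) (hΔt : 0 < Δt)
    (d : ℝ → EuclideanSpace ℝ (Fin n))
    (hd : ContDiffAt ℝ 1 d 1) (hd1 : d 1 ≠ 0) :
    ∃ ε > (0 : ℝ), ∃ γ' : ℝ → ℝ, γ' 0 = 1 ∧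
      ContinuousOn γ' (Set.Ioo (-ε) ε) ∧
      ∀ lam ∈ Set.Ioo (-ε) ε, lam - (γ' lam - 1) * Δt * ‖d (γ' lam)‖ = 0 :=
  stmt_2_general Δt hΔt d hd hd1
end

section
/- Let u : ℝ → ℝ^d be twice continuously differentiable, let t₀ ∈ ℝ, let p ≥ 2 be an integer, and let Δt₀ > 0. Let U, W : (0, Δt₀] → ℝ^d and Γ : (0, Δt₀] → ℝ, and suppose there are constants C₁, C₂, C₃ ≥ 0 such that for all Δt ∈ (0, Δt₀]: (i) ‖U(Δt) − u(t₀ + Δt)‖ ≤ C₁ Δt^{p+1} (the baseline method is of order p with u^n = u(t₀)); (ii) |Γ(Δt) − 1| ≤ C₂ Δt^{p−1}; (iii) ‖W(Δt) − [U(Δt) + (Γ(Δt) − 1)(U(Δt) − u(t₀))]‖ ≤ C₃ Δt^{p+1}. Then there exist C ≥ 0 and δ ∈ (0, Δt₀] such that ‖W(Δt) − u(t₀ + Γ(Δt)Δt)‖ ≤ C Δt^{p+1} for all Δt ∈ (0, δ], i.e., the relaxed update is also of order p. -/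
/-!
Write `γ = Γ Δt` and `e τ = u (t₀ + τ) - u t₀ - τ • u' t₀`. Then `W Δt - u (t₀ + γ Δt)` is the
defect of (iii), plus `γ` times the defect of (i), plus
`γ • e Δt - e (γ Δt) = (γ - 1) • e Δt + (e Δt - e (γ Δt))`.
Since `e' τ = u' (t₀ + τ) - u' t₀ = O(τ)`, the mean value theorem bounds both pieces by
`O(|γ - 1| Δt²) = O(Δt^(p+1))`.
-/

open Asymptotics Filter Set Topology

section Ioc

variable {E : Type*} [NormedAddCommGroup E]

theorem isBigO_nhdsGT_zero_pow_of_forall_Ioc {f : ℝ → E} {δ C : ℝ} {n : ℕ} (hδ : 0 < δ)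
    (hf : ∀ x ∈ Ioc 0 δ, ‖f x‖ ≤ C * x ^ n) : f =O[𝓝[>] 0] fun x => x ^ n := by
  refine IsBigO.of_bound C ?_
  filter_upwards [Ioc_mem_nhdsGT hδ] with x hx
  rw [Real.norm_eq_abs, abs_of_nonneg (pow_nonneg hx.1.le n)]
  exact hf x hx

theorem Asymptotics.IsBigO.exists_forall_Ioc_norm_le {f : ℝ → E} {n : ℕ}
    (hf : f =O[𝓝[>] 0] fun x => x ^ n) {δ₀ : ℝ} (hδ₀ : 0 < δ₀) :
    ∃ C ≥ (0 : ℝ), ∃ δ ∈ Ioc (0 : ℝ) δ₀, ∀ x ∈ Ioc (0 : ℝ) δ, ‖f x‖ ≤ C * x ^ n := by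
  obtain ⟨C, hC, hfC⟩ := hf.exists_nonneg
  obtain ⟨ε, hε, hbound⟩ := (nhdsGT_basis_Ioc (0 : ℝ)).eventually_iff.mp hfC.bound
  refine ⟨C, hC, min ε δ₀, ⟨lt_min hε hδ₀, min_le_right _ _⟩, fun x hx => ?_⟩
  have hx' : x ∈ Ioc 0 ε := ⟨hx.1, hx.2.trans (min_le_left _ _)⟩
  simpa [abs_of_pos hx.1] using hbound hx'

end Ioc

section Secant

variable {E : Type*} [NormedAddCommGroup E] [NormedSpace ℝ E]

theorem norm_sub_sub_smul_le_of_norm_deriv_sub_le {f f' : ℝ → E} {t m L a b : ℝ}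
    (hf : ∀ τ ∈ Icc (-m) m, HasDerivAt f (f' (t + τ)) (t + τ))
    (hf' : ∀ τ ∈ Icc (-m) m, ‖f' (t + τ) - f' t‖ ≤ L * |τ|) (hL : 0 ≤ L)
    (ha : a ∈ Icc (-m) m) (hb : b ∈ Icc (-m) m) :
    ‖f (t + b) - f (t + a) - (b - a) • f' t‖ ≤ L * m * |b - a| := by
  have hderiv : ∀ τ ∈ Icc (-m) m, HasDerivWithinAt (fun τ => f (t + τ) - τ • f' t)
      (f' (t + τ) - f' t) (Icc (-m) m) τ := fun τ hτ => by
    have := ((hf τ hτ).comp_const_add t τ).sub ((hasDerivAt_id' τ).smul_const (f' t))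
    rw [one_smul] at this
    exact this.hasDerivWithinAt
  have hbound : ∀ τ ∈ Icc (-m) m, ‖f' (t + τ) - f' t‖ ≤ L * m := fun τ hτ =>
    (hf' τ hτ).trans (mul_le_mul_of_nonneg_left (abs_le.mpr hτ) hL)
  have := (convex_Icc (-m) m).norm_image_sub_le_of_norm_hasDerivWithin_le hderiv hbound ha hb
  rw [Real.norm_eq_abs] at this
  convert this using 2
  rw [sub_smul]
  abel

theorem norm_smul_secant_sub_secant_le {f f' : ℝ → E} {t r L K γ h : ℝ}
    (hf : ∀ τ ∈ Icc (-r) r, HasDerivAt f (f' (t + τ)) (t + τ))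
    (hf' : ∀ τ ∈ Icc (-r) r, ‖f' (t + τ) - f' t‖ ≤ L * |τ|) (hL : 0 ≤ L)
    (hK : 1 ≤ K) (hγ : |γ| ≤ K) (hh : K * |h| ≤ r) :
    ‖γ • (f (t + h) - f t) - (f (t + γ * h) - f t)‖ ≤ 2 * L * K * |γ - 1| * h ^ 2 := by
  set m := K * |h|
  have hsub : Icc (-m) m ⊆ Icc (-r) r := Icc_subset_Icc (neg_le_neg hh) hh
  have hmem : ∀ c, |c| ≤ K → c * h ∈ Icc (-m) m := fun c hc => abs_le.mp <| by
    rw [abs_mul]; exact mul_le_mul_of_nonneg_right hc (abs_nonneg h)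
  have hf_m := fun τ hτ => hf τ (hsub hτ)
  have hf'_m := fun τ hτ => hf' τ (hsub hτ)
  have h0 := hmem 0 (by rw [abs_zero]; linarith)
  have h1 := hmem 1 (by simpa using hK)
  have hγh := hmem γ hγ
  simp only [zero_mul, one_mul] at h0 h1
  have e_h := norm_sub_sub_smul_le_of_norm_deriv_sub_le hf_m hf'_m hL h0 h1
  have e_γh := norm_sub_sub_smul_le_of_norm_deriv_sub_le hf_m hf'_m hL hγh h1
  simp only [add_zero, sub_zero] at e_h
  have hsplit : γ • (f (t + h) - f t) - (f (t + γ * h) - f t) =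
      (γ - 1) • (f (t + h) - f t - h • f' t) +
        (f (t + h) - f (t + γ * h) - (h - γ * h) • f' t) := by
    module
  have habs : |h - γ * h| = |γ - 1| * |h| := by
    rw [show h - γ * h = -((γ - 1) * h) by ring, abs_neg, abs_mul]
  calc ‖γ • (f (t + h) - f t) - (f (t + γ * h) - f t)‖
      ≤ |γ - 1| * (L * m * |h|) + L * m * |h - γ * h| := by
        rw [hsplit]
        refine (norm_add_le _ _).trans (add_le_add ?_ e_γh)
        rw [norm_smul, Real.norm_eq_abs]
        exact mul_le_mul_of_nonneg_left e_h (abs_nonneg _)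
    _ = 2 * L * K * |γ - 1| * h ^ 2 := by
        rw [habs, ← sq_abs h]; ring

theorem ContDiff.exists_norm_deriv_sub_le {f : ℝ → E} (hf : ContDiff ℝ 2 f) (t : ℝ) :
    ∃ r > 0, ∃ L ≥ 0, ∀ τ ∈ Icc (-r) r, ‖deriv f (t + τ) - deriv f t‖ ≤ L * |τ| := by
  obtain ⟨K, s, hs, hlip⟩ := (hf.deriv' (n := 1)).contDiffAt.exists_lipschitzOnWith
  obtain ⟨ε, hε, hball⟩ := Metric.mem_nhds_iff.mp hs
  refine ⟨ε / 2, by positivity, K, K.2, fun τ hτ => ?_⟩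
  have hτ' : t + τ ∈ s := hball <| by
    rw [Metric.mem_ball, Real.dist_eq, add_sub_cancel_left]
    exact (abs_le.mpr hτ).trans_lt (half_lt_self hε)
  have := hlip.norm_sub_le hτ' (hball (Metric.mem_ball_self hε))
  rwa [add_sub_cancel_left, Real.norm_eq_abs] at this

theorem ContDiff.isBigO_smul_secant_sub_secant {α : Type*} {l : Filter α} {f : ℝ → E}
    (hf : ContDiff ℝ 2 f) (t : ℝ) {γ h : α → ℝ} (hγ : γ =O[l] fun _ => (1 : ℝ))
    (hh : Tendsto h l (𝓝 0)) :
    (fun x => γ x • (f (t + h x) - f t) - (f (t + γ x * h x) - f t)) =O[l]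
      fun x => (γ x - 1) * h x ^ 2 := by
  obtain ⟨r, hr, L, hL, hderiv⟩ := hf.exists_norm_deriv_sub_le t
  have hdiff : ∀ τ ∈ Icc (-r) r, HasDerivAt f (deriv f (t + τ)) (t + τ) := fun τ _ =>
    ((hf.differentiable (by norm_num)) (t + τ)).hasDerivAt
  obtain ⟨c, hc⟩ := hγ.bound
  set K := max c 1
  have hK : 0 < K := zero_lt_one.trans_le (le_max_right c 1)
  have hsmall : ∀ᶠ x in l, K * |h x| ≤ r := by
    filter_upwards [hh.eventually (Metric.closedBall_mem_nhds 0 (div_pos hr hK))] with x hx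
    rw [Real.dist_0_eq_abs, le_div_iff₀ hK] at hx
    linarith
  refine IsBigO.of_bound (2 * L * K) ?_
  filter_upwards [hc, hsmall] with x hcx hx
  rw [norm_one, mul_one, Real.norm_eq_abs] at hcx
  rw [norm_mul, norm_pow, Real.norm_eq_abs, Real.norm_eq_abs, sq_abs, ← mul_assoc]
  exact norm_smul_secant_sub_secant_le hdiff hderiv hL (le_max_right c 1)
    (hcx.trans (le_max_left c 1)) hx

theorem isBigO_pow_pow_nhds_zero_of_le {m n : ℕ} (h : m ≤ n) :
    (fun x : ℝ => x ^ n) =O[𝓝 0] fun x => x ^ m := by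
  rcases h.eq_or_lt with rfl | hlt
  · exact isBigO_refl _ _
  · exact (isLittleO_pow_pow hlt).isBigO

theorem ContDiff.isBigO_relaxed_sub {l : Filter ℝ} {u : ℝ → E} (hu : ContDiff ℝ 2 u) (t₀ : ℝ)
    (hl : l ≤ 𝓝 0) {U W : ℝ → E} {Γ : ℝ → ℝ} {n q : ℕ} (hnq : n ≤ q + 2)
    (hU : (fun h => U h - u (t₀ + h)) =O[l] fun h => h ^ n)
    (hΓ : (fun h => Γ h - 1) =O[l] fun h => h ^ q)
    (hW : (fun h => W h - (U h + (Γ h - 1) • (U h - u t₀))) =O[l] fun h => h ^ n) :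
    (fun h => W h - u (t₀ + Γ h * h)) =O[l] fun h => h ^ n := by
  have htendsto : Tendsto (fun h : ℝ => h) l (𝓝 0) := tendsto_id.mono_left hl
  have hΓ_bdd : Γ =O[l] fun _ => (1 : ℝ) :=
    ((hΓ.trans ((htendsto.pow q).isBigO_one ℝ)).add (isBigO_refl _ l)).congr_left
      fun h => sub_add_cancel (Γ h) 1
  have hsecant : (fun h => Γ h • (u (t₀ + h) - u t₀) - (u (t₀ + Γ h * h) - u t₀)) =O[l]
      fun h => h ^ n := by
    refine (hu.isBigO_smul_secant_sub_secant t₀ hΓ_bdd htendsto).trans ?_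
    refine ((hΓ.mul (isBigO_refl (fun h : ℝ => h ^ 2) l)).trans ?_)
    simpa only [← pow_add] using (isBigO_pow_pow_nhds_zero_of_le hnq).mono hl
  have hdefect : (fun h => Γ h • (U h - u (t₀ + h))) =O[l] fun h => h ^ n := by
    simpa only [one_smul] using hΓ_bdd.smul hU
  refine ((hW.add hdefect).add hsecant).congr_left fun h => ?_
  module

end Secant

theorem stmt_4_general {d : ℕ} (u : ℝ → EuclideanSpace ℝ (Fin d)) (hu : ContDiff ℝ 2 u)
    (t₀ : ℝ) (p : ℕ) (Δt₀ : ℝ) (hΔt₀ : 0 < Δt₀)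
    (U W : ℝ → EuclideanSpace ℝ (Fin d)) (Γ : ℝ → ℝ)
    (C₁ C₂ C₃ : ℝ)
    (h1 : ∀ Δt ∈ Set.Ioc (0 : ℝ) Δt₀, ‖U Δt - u (t₀ + Δt)‖ ≤ C₁ * Δt ^ (p + 1))
    (h2 : ∀ Δt ∈ Set.Ioc (0 : ℝ) Δt₀, |Γ Δt - 1| ≤ C₂ * Δt ^ (p - 1))
    (h3 : ∀ Δt ∈ Set.Ioc (0 : ℝ) Δt₀,
      ‖W Δt - (U Δt + (Γ Δt - 1) • (U Δt - u t₀))‖ ≤ C₃ * Δt ^ (p + 1)) :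
    ∃ C ≥ (0 : ℝ), ∃ δ ∈ Set.Ioc (0 : ℝ) Δt₀,
      ∀ Δt ∈ Set.Ioc (0 : ℝ) δ,
        ‖W Δt - u (t₀ + Γ Δt * Δt)‖ ≤ C * Δt ^ (p + 1) := by
  have hrelaxed := hu.isBigO_relaxed_sub t₀ nhdsWithin_le_nhds (by omega : p + 1 ≤ p - 1 + 2)
    (isBigO_nhdsGT_zero_pow_of_forall_Ioc hΔt₀ h1)
    (isBigO_nhdsGT_zero_pow_of_forall_Ioc hΔt₀ h2)
    (isBigO_nhdsGT_zero_pow_of_forall_Ioc hΔt₀ h3)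
  exact hrelaxed.exists_forall_Ioc_norm_le hΔt₀

/-- If the baseline approximation `U` is of order `p` (starting
from the exact value `u t₀`), the relaxation parameter satisfies
`Γ Δt = 1 + O(Δt^(p-1))`, and the relaxed update `W` agrees with
`U + (Γ - 1)(U - u t₀)` up to `O(Δt^(p+1))`, then `W Δt` approximates the exact
solution at the relaxed time `t₀ + Γ Δt * Δt` with order `p`. -/
theorem stmt_4 {d : ℕ} (u : ℝ → EuclideanSpace ℝ (Fin d)) (hu : ContDiff ℝ 2 u)
    (t₀ : ℝ) (p : ℕ) (hp : 2 ≤ p) (Δt₀ : ℝ) (hΔt₀ : 0 < Δt₀)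
    (U W : ℝ → EuclideanSpace ℝ (Fin d)) (Γ : ℝ → ℝ)
    (C₁ C₂ C₃ : ℝ) (hC₁ : 0 ≤ C₁) (hC₂ : 0 ≤ C₂) (hC₃ : 0 ≤ C₃)
    (h1 : ∀ Δt ∈ Set.Ioc (0 : ℝ) Δt₀, ‖U Δt - u (t₀ + Δt)‖ ≤ C₁ * Δt ^ (p + 1))
    (h2 : ∀ Δt ∈ Set.Ioc (0 : ℝ) Δt₀, |Γ Δt - 1| ≤ C₂ * Δt ^ (p - 1))
    (h3 : ∀ Δt ∈ Set.Ioc (0 : ℝ) Δt₀,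
      ‖W Δt - (U Δt + (Γ Δt - 1) • (U Δt - u t₀))‖ ≤ C₃ * Δt ^ (p + 1)) :
    ∃ C ≥ (0 : ℝ), ∃ δ ∈ Set.Ioc (0 : ℝ) Δt₀,
      ∀ Δt ∈ Set.Ioc (0 : ℝ) δ,
        ‖W Δt - u (t₀ + Γ Δt * Δt)‖ ≤ C * Δt ^ (p + 1) :=
  stmt_4_general u hu t₀ p Δt₀ hΔt₀ U W Γ C₁ C₂ C₃ h1 h2 h3
end

section
/- Let U : (0, ∞) → ℝ be the entropy U(x) = −√x. Then for every x > 0 the derivative of U at x is −1/(2√x), and for all a, b > 0 with a ≠ b, the Tadmor entropy-conservative flux ((U'(b)·b − U(b)) − (U'(a)·a − U(a))) / (U'(b) − U'(a)) equals the geometric mean √(a·b). -/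
/-! For `U x = -√x` the entropy variable is `w = -1/(2√x)` and the flux potential is
`ψ = w x - U = √x / 2`. Writing `s = √a`, `t = √b`, Tadmor's flux is
`(t - s) / 2 ÷ (t - s) / (2 s t) = s t = √(a b)`; the factor `t - s` cancels because
`√` is injective on the positive reals. -/

open Real

theorem hasDerivAt_neg_sqrt {x : ℝ} (hx : x ≠ 0) :
    HasDerivAt (fun y => -√y) (-1 / (2 * √x)) x :=
  (hasDerivAt_sqrt hx).neg.congr_deriv (by ring)

theorem deriv_neg_sqrt_mul_sub_neg_sqrt {x : ℝ} (hx : 0 < x) :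
    deriv (fun y => -√y) x * x - -√x = √x / 2 := by
  have hs : 0 < √x := sqrt_pos.mpr hx
  rw [(hasDerivAt_neg_sqrt hx.ne').deriv]
  nth_rewrite 2 [← sq_sqrt hx.le]
  field_simp
  ring

theorem half_sub_half_div_inv_sub_inv_eq_mul {s t : ℝ} (hs : 0 < s) (ht : 0 < t) (hst : s ≠ t) :
    (t / 2 - s / 2) / (-1 / (2 * t) - -1 / (2 * s)) = s * t := by
  have hden : -1 / (2 * t) - -1 / (2 * s) ≠ 0 := by
    field_simp
    exact div_ne_zero (fun h => hst (by linarith)) (by positivity)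
  rw [div_eq_iff hden]
  field_simp
  ring

/-- For the entropy `U x = -√x`, the derivative at every `x > 0`
is `-1/(2√x)`, and Tadmor's entropy-conservative flux
`((U'(b)b - U(b)) - (U'(a)a - U(a))) / (U'(b) - U'(a))` equals the geometric mean
`√(a b)` for all positive `a ≠ b`. -/
theorem stmt_8 (U : ℝ → ℝ) (hU : ∀ x : ℝ, U x = -Real.sqrt x) :
    (∀ x : ℝ, 0 < x → HasDerivAt U (-1 / (2 * Real.sqrt x)) x) ∧
    ∀ a b : ℝ, 0 < a → 0 < b → a ≠ b →
      ((deriv U b * b - U b) - (deriv U a * a - U a)) / (deriv U b - deriv U a)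
        = Real.sqrt (a * b) := by
  obtain rfl : U = fun y => -√y := funext hU
  refine ⟨fun x hx => hasDerivAt_neg_sqrt hx.ne', fun a b ha hb hab => ?_⟩
  have hsqrt : √a ≠ √b := fun h => hab <| (sqrt_inj ha.le hb.le).mp h
  rw [deriv_neg_sqrt_mul_sub_neg_sqrt ha, deriv_neg_sqrt_mul_sub_neg_sqrt hb,
    (hasDerivAt_neg_sqrt ha.ne').deriv, (hasDerivAt_neg_sqrt hb.ne').deriv,
    sqrt_mul ha.le]
  exact half_sub_half_div_inv_sub_inv_eq_mul (sqrt_pos.mpr ha) (sqrt_pos.mpr hb) hsqrt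
end

section
/- Let g > 0, let v ∈ ℝ, and let h₋, h₊ > 0 with h₋ ≠ h₊. For the shallow water equations, the entropy variables at constant velocity v are w(h) = (g·h − v²/2, v) ∈ ℝ² and the entropy flux potential is ψ(h) = (1/2)·g·h²·v. If a numerical flux f = (f_h, f_{hv}) ∈ ℝ² satisfies the entropy-conservation condition (w(h₊) − w(h₋)) · f = ψ(h₊) − ψ(h₋) (Euclidean dot product), then necessarily f_h = ((h₋ + h₊)/2)·v, i.e., the water-height flux is forced to be the arithmetic mean of the heights times the velocity. -/
/-- For the shallow water equations at constant velocity `v`,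
with entropy variables `w h = (g h - v²/2, v)` and entropy flux potential
`ψ h = (1/2) g h² v`, any numerical flux `(fh, fhv)` satisfying the
entropy-conservation condition `(w h₊ - w h₋) ⬝ f = ψ h₊ - ψ h₋` must have
water-height flux `fh = ((h₋ + h₊)/2) v`, the arithmetic mean times `v`. -/
theorem stmt_11 (g v : ℝ) (hg : 0 < g) (hm hp : ℝ) (hhm : 0 < hm) (hhp : 0 < hp)
    (hne : hm ≠ hp) (fh fhv : ℝ)
    (hcons : ((g * hp - v ^ 2 / 2) - (g * hm - v ^ 2 / 2)) * fh + (v - v) * fhv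
      = (1 / 2) * g * hp ^ 2 * v - (1 / 2) * g * hm ^ 2 * v) :
    fh = ((hm + hp) / 2) * v := by
  have hne' : hp - hm ≠ 0 := sub_ne_zero.mpr (Ne.symm hne)
  have h1 : g * (hp - hm) * fh = g * (hp - hm) * (((hm + hp) / 2) * v) := by ring_nf; ring_nf at hcons; linarith
  exact mul_left_cancel₀ (mul_ne_zero hg.ne' hne') h1
end

section
/- Let N ≥ 3 be a natural number, let Δx > 0, and let A be the real N×N matrix indexed by ℤ/Nℤ with (A u)_i = −(u_{i+1} − u_{i−1})/(2Δx), i.e., A_{i,i+1} = −1/(2Δx), A_{i,i−1} = 1/(2Δx), and all other entries zero. Then the linear semidiscretization u'(t) = A u(t) is not positivity-preserving: there exist an initial vector u⁰ with all components strictly positive, a time t > 0, and an index i such that the i-th component of exp(tA)·u⁰ is strictly negative. -/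
open Matrix NormedSpace Filter Topology

/-!
Since `exp (t • A) = 1 + t • A + O(t²)`, an off-diagonal entry `A i j < 0` makes
`exp (t • A) i j` negative for small `t > 0`. A matrix with a negative entry `M i j` maps
the positive vector `e_j + ε 𝟙`, for `ε` small, to a vector whose `i`-th entry is negative.
For the central difference matrix the relevant entry is `A 0 1 = -1 / (2Δx)`.
-/

theorem HasDerivAt.exists_gt_apply_neg {f : ℝ → ℝ} {f' x : ℝ} (hf : HasDerivAt f f' x)
    (hfx : f x = 0) (hf' : f' < 0) : ∃ y, x < y ∧ f y < 0 := by
  have hsign : ∀ᶠ y in 𝓝[>] x, SignType.sign (f y) = SignType.sign (x - y) :=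
    nhdsWithin_le_nhds (eventually_nhdsWithin_sign_eq_of_deriv_neg (hf.deriv ▸ hf') hfx)
  obtain ⟨y, hy, hxy⟩ := (hsign.and self_mem_nhdsWithin).exists
  refine ⟨y, hxy, ?_⟩
  rwa [sign_neg (sub_neg.mpr hxy), sign_eq_neg_one_iff] at hy

section MatrixExp

variable {ι : Type*} [Fintype ι] [DecidableEq ι]

theorem Matrix.hasDerivAt_exp_smul_apply (A : Matrix ι ι ℝ) (i j : ι) (t : ℝ) :
    HasDerivAt (fun s : ℝ => exp (s • A) i j) ((exp (t • A) * A) i j) t := by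
  -- Any submultiplicative norm works: `exp` and `HasDerivAt` depend only on the topology.
  let _ : NormedRing (Matrix ι ι ℝ) := Matrix.linftyOpNormedRing
  let _ : NormedAlgebra ℝ (Matrix ι ι ℝ) := Matrix.linftyOpNormedAlgebra
  let entry : Matrix ι ι ℝ →L[ℝ] ℝ := (entryLinearMap ℝ ℝ i j).toContinuousLinearMap
  exact entry.hasFDerivAt.comp_hasDerivAt t (hasDerivAt_exp_smul_const A t)

theorem Matrix.exists_pos_exp_smul_apply_neg (A : Matrix ι ι ℝ) {i j : ι} (hij : i ≠ j)
    (hA : A i j < 0) : ∃ t : ℝ, 0 < t ∧ exp (t • A) i j < 0 := by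
  have hderiv := A.hasDerivAt_exp_smul_apply i j 0
  rw [zero_smul, exp_zero, one_mul] at hderiv
  exact hderiv.exists_gt_apply_neg (by simp [hij]) hA

end MatrixExp

theorem Matrix.exists_pos_mulVec_apply_neg {m n : Type*} [Fintype n] [DecidableEq n]
    (M : Matrix m n ℝ) {i : m} {j : n} (hM : M i j < 0) :
    ∃ u : n → ℝ, (∀ k, 0 < u k) ∧ (M *ᵥ u) i < 0 := by
  set S := ∑ k, M i k
  set ε := -M i j / (|S| + 1)
  have hε : 0 < ε := div_pos (neg_pos.mpr hM) (by positivity)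
  have hεS : ε * S < -M i j := calc
    ε * S ≤ ε * |S| := mul_le_mul_of_nonneg_left (le_abs_self S) hε.le
    _ < ε * (|S| + 1) := by linarith
    _ = -M i j := div_mul_cancel₀ _ (by positivity)
  refine ⟨Pi.single j 1 + fun _ => ε, fun k => ?_, ?_⟩
  · have : 0 ≤ (Pi.single j 1 : n → ℝ) k :=
      (Pi.single_nonneg.2 zero_le_one : 0 ≤ (Pi.single j 1 : n → ℝ)) k
    simp only [Pi.add_apply]
    linarith
  · have hmulVec : (M *ᵥ (Pi.single j 1 + fun _ => ε)) i = M i j + ε * S := by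
      rw [mulVec_add, Pi.add_apply, mulVec_single_one, col_apply, Finset.mul_sum]
      simp only [mulVec, dotProduct, mul_comm]
    linarith

/-- The second-order central discretization of linear advection
with periodic boundary conditions, `(A u)ᵢ = -(uᵢ₊₁ - uᵢ₋₁)/(2Δx)`, is not
positivity-preserving: there are a componentwise positive initial vector `u⁰`,
a time `t > 0`, and an index `i` such that `(exp(tA) u⁰)ᵢ < 0`. -/
theorem stmt_12 (N : ℕ) [NeZero N] (hN : 3 ≤ N) (Δx : ℝ) (hΔx : 0 < Δx)
    (A : Matrix (ZMod N) (ZMod N) ℝ)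
    (hA : ∀ i j : ZMod N, A i j =
      if j = i + 1 then -1 / (2 * Δx) else if j = i - 1 then 1 / (2 * Δx) else 0) :
    ∃ u0 : ZMod N → ℝ, (∀ i, 0 < u0 i) ∧
      ∃ t : ℝ, 0 < t ∧ ∃ i : ZMod N, (NormedSpace.exp (t • A)).mulVec u0 i < 0 := by
  have : Fact (1 < N) := ⟨by omega⟩
  have hA01 : A 0 1 < 0 := by
    rw [hA, if_pos (zero_add 1).symm]
    exact div_neg_of_neg_of_pos (by norm_num) (by positivity)
  obtain ⟨t, ht, hexp⟩ := A.exists_pos_exp_smul_apply_neg zero_ne_one hA01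
  obtain ⟨u, hu, hneg⟩ := (exp (t • A)).exists_pos_mulVec_apply_neg hexp
  exact ⟨u, hu, t, ht, 0, hneg⟩
end

section
/- Let M be a real d×d matrix whose off-diagonal entries are all nonpositive and each of whose columns sums to 1, let γ > 0, and set M_γ = γ(M − I) + I. Then M_γ is invertible, every entry of M_γ^{-1} is nonnegative, every row of M_γ^{-1} contains a strictly positive entry, and consequently for every vector b ∈ ℝ^d with all components strictly positive, the unique solution x of M_γ x = b has all components strictly positive. -/
/-!
`M_γ = γ(M - I) + I` is again a Z-matrix (nonpositive off-diagonal entries) with unit column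
sums. For such a matrix `A`, `A x ≥ 0` forces `x ≥ 0`: summing `(A x)_i` over the set `N` of
indices where `x` is negative gives `∑_j x_j ∑_{i ∈ N} A_ij`, in which every term is `≤ 0`, and
the terms with `j ∈ N` are `< 0` because a partial column sum containing the diagonal entry
dominates the full column sum. This monotonicity gives injectivity (hence invertibility) and,
applied to the columns of `A⁻¹`, nonnegativity of the inverse; a row of an invertible matrix
cannot vanish, and a nonnegative matrix with no zero row maps positive vectors to positive ones.
-/

namespace Matrix

section

variable {ι K : Type*} [Fintype ι] [CommRing K] [LinearOrder K] [IsStrictOrderedRing K]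

theorem sum_le_sum_of_mem_of_offDiag_nonpos {A : Matrix ι ι K}
    (hoff : ∀ i j, i ≠ j → A i j ≤ 0) {s : Finset ι} {j : ι} (hj : j ∈ s) :
    ∑ i, A i j ≤ ∑ i ∈ s, A i j :=
  Finset.sum_le_sum_of_subset_of_nonpos' (Finset.subset_univ s)
    fun i _ his => hoff i j fun hij => his (hij ▸ hj)

omit [Fintype ι] in
theorem sum_nonpos_of_notMem_of_offDiag_nonpos {A : Matrix ι ι K}
    (hoff : ∀ i j, i ≠ j → A i j ≤ 0) {s : Finset ι} {j : ι} (hj : j ∉ s) :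
    ∑ i ∈ s, A i j ≤ 0 :=
  Finset.sum_nonpos fun i hi => hoff i j fun hij => hj (hij ▸ hi)

theorem nonneg_of_mulVec_nonneg {A : Matrix ι ι K} (hoff : ∀ i j, i ≠ j → A i j ≤ 0)
    (hcol : ∀ j, 0 < ∑ i, A i j) {x : ι → K} (hAx : 0 ≤ A *ᵥ x) : 0 ≤ x := by
  by_contra hx
  obtain ⟨j₀, hj₀⟩ : ∃ j, x j < 0 := by simpa [Pi.le_def] using hx
  set N := Finset.univ.filter fun i => x i < 0
  have hterm_neg : ∀ j ∈ N, x j * ∑ i ∈ N, A i j < 0 := fun j hj =>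
    mul_neg_of_neg_of_pos (Finset.mem_filter.1 hj).2
      ((hcol j).trans_le (sum_le_sum_of_mem_of_offDiag_nonpos hoff hj))
  have hsum_neg : ∑ j, x j * ∑ i ∈ N, A i j < 0 := by
    refine Finset.sum_neg' (fun j _ => ?_) ⟨j₀, Finset.mem_univ _, hterm_neg j₀ (by simpa [N])⟩
    by_cases hj : j ∈ N
    · exact (hterm_neg j hj).le
    · exact mul_nonpos_of_nonneg_of_nonpos (by simpa [N] using hj)
        (sum_nonpos_of_notMem_of_offDiag_nonpos hoff hj)
  have hsum_eq : ∑ j, x j * ∑ i ∈ N, A i j = ∑ i ∈ N, (A *ᵥ x) i := by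
    simp only [mulVec, dotProduct, Finset.mul_sum]
    rw [Finset.sum_comm]
    simp only [mul_comm]
  exact (hsum_eq ▸ hsum_neg).not_ge (Finset.sum_nonneg fun i _ => hAx i)

theorem exists_ne_zero_of_isUnit_det [DecidableEq ι] {A : Matrix ι ι K} (hA : IsUnit A.det)
    (i : ι) : ∃ j, A i j ≠ 0 := by
  by_contra! h
  exact hA.ne_zero (det_eq_zero_of_row_eq_zero i h)

theorem mulVec_pos_of_nonneg_of_exists_pos {B : Matrix ι ι K} (hB : ∀ i j, 0 ≤ B i j)
    (hrow : ∀ i, ∃ j, 0 < B i j) {b : ι → K} (hb : ∀ i, 0 < b i) (i : ι) : 0 < (B *ᵥ b) i := by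
  obtain ⟨j, hj⟩ := hrow i
  exact Finset.sum_pos' (fun k _ => mul_nonneg (hB i k) (hb k).le)
    ⟨j, Finset.mem_univ j, mul_pos hj (hb j)⟩

end

section

variable {ι K : Type*} [Fintype ι] [DecidableEq ι] [Field K] [LinearOrder K]
  [IsStrictOrderedRing K]

theorem isUnit_det_of_offDiag_nonpos_of_sum_col_pos {A : Matrix ι ι K}
    (hoff : ∀ i j, i ≠ j → A i j ≤ 0) (hcol : ∀ j, 0 < ∑ i, A i j) : IsUnit A.det := by
  refine isUnit_iff_ne_zero.2 fun hdet => ?_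
  obtain ⟨v, hv, hAv⟩ := exists_mulVec_eq_zero_iff.2 hdet
  have hv_nonneg : 0 ≤ v := nonneg_of_mulVec_nonneg hoff hcol hAv.ge
  have hv_neg_nonneg : 0 ≤ -v :=
    nonneg_of_mulVec_nonneg hoff hcol (by rw [mulVec_neg, hAv, neg_zero])
  exact hv (le_antisymm (neg_nonneg.1 hv_neg_nonneg) hv_nonneg)

theorem inv_nonneg_of_offDiag_nonpos_of_sum_col_pos {A : Matrix ι ι K}
    (hoff : ∀ i j, i ≠ j → A i j ≤ 0) (hcol : ∀ j, 0 < ∑ i, A i j) (i j : ι) :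
    0 ≤ A⁻¹ i j := by
  have hA := isUnit_det_of_offDiag_nonpos_of_sum_col_pos hoff hcol
  have hcol_inv : A *ᵥ (A⁻¹ *ᵥ Pi.single j 1) = Pi.single j 1 := by
    rw [mulVec_mulVec, mul_nonsing_inv A hA, one_mulVec]
  have := nonneg_of_mulVec_nonneg hoff hcol (hcol_inv ▸ Pi.single_nonneg.2 zero_le_one) i
  simpa [mulVec_single_one] using this

end

end Matrix

open Matrix in
/-- If `M` is a real `d × d` matrix with nonpositive off-diagonal
entries and unit column sums, and `γ > 0`, then `M_γ = γ(M - I) + I` is invertible,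
its inverse has nonnegative entries, every row of the inverse contains a strictly
positive entry, and consequently the solution of `M_γ x = b` is componentwise
strictly positive whenever `b` is. -/
theorem stmt_14 {d : ℕ} (M : Matrix (Fin d) (Fin d) ℝ)
    (hoff : ∀ i j, i ≠ j → M i j ≤ 0)
    (hcol : ∀ j, ∑ i, M i j = 1)
    (γ : ℝ) (hγ : 0 < γ) :
    IsUnit (γ • (M - 1) + 1) ∧
    (∀ i j, 0 ≤ (γ • (M - 1) + 1)⁻¹ i j) ∧
    (∀ i, ∃ j, 0 < (γ • (M - 1) + 1)⁻¹ i j) ∧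
    ∀ b x : Fin d → ℝ, (∀ i, 0 < b i) →
      (γ • (M - 1) + 1).mulVec x = b → ∀ i, 0 < x i := by
  set A := γ • (M - 1) + 1
  have hAoff : ∀ i j, i ≠ j → A i j ≤ 0 := fun i j hij => by
    simpa [A, one_apply_ne hij] using mul_nonpos_of_nonneg_of_nonpos hγ.le (hoff i j hij)
  have hAcol : ∀ j, 0 < ∑ i, A i j := fun j => by
    simp [A, Finset.sum_add_distrib, ← Finset.mul_sum, hcol, one_apply]
  have hdet := isUnit_det_of_offDiag_nonpos_of_sum_col_pos hAoff hAcol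
  have hinv_nonneg := inv_nonneg_of_offDiag_nonpos_of_sum_col_pos hAoff hAcol
  have hinv_row : ∀ i, ∃ j, 0 < A⁻¹ i j := fun i => by
    obtain ⟨j, hj⟩ := exists_ne_zero_of_isUnit_det (isUnit_nonsing_inv_det A hdet) i
    exact ⟨j, (hinv_nonneg i j).lt_of_ne' hj⟩
  refine ⟨(isUnit_iff_isUnit_det A).2 hdet, hinv_nonneg, hinv_row, fun b x hb hAx => ?_⟩
  have hx : x = A⁻¹ *ᵥ b := by
    rw [← hAx, mulVec_mulVec, nonsing_inv_mul A hdet, one_mulVec]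
  exact hx ▸ mulVec_pos_of_nonneg_of_exists_pos hinv_nonneg hinv_row hb
end
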